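/- For d ∈ {3,7,11}, the set K_d = {z ∈ ℂ : |z| < |z−λ| for all λ ∈ 𝔬_d with λ ≠ 0} is equal to the open hexagon {x + iy : x, y ∈ ℝ, |x| < 1/2, |x − √d·y| < (d+1)/4, |x + √d·y| < (d+1)/4}. -/

import Mathlib

open MeasureTheory Filter Topology

noncomputable section

/-- `ω` for the ring of integers of `ℚ(√-d)`. -/
def om (d : ℕ) : ℂ :=
  if d % 4 = 3 then (-1 + Complex.I * Real.sqrt d) / 2 else Complex.I * Real.sqrt d

/-- The ring of integers `𝔬_d = ℤ[ω]` as a subset of `ℂ`. -/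
def Od (d : ℕ) : Set ℂ := {z | ∃ n m : ℤ, z = (n : ℂ) + (m : ℂ) * om d}

/-- The field `ℚ(√-d)` as a subset of `ℂ`. -/
def Qd (d : ℕ) : Set ℂ := {z | ∃ a b : ℚ, z = (a : ℂ) + (b : ℂ) * om d}

/-- The open Dirichlet fundamental domain `K_d` centred at the origin. -/
def Kd (d : ℕ) : Set ℂ :=
  {z | ∀ lam ∈ Od d, lam ≠ 0 → ‖z‖ < ‖z - lam‖}

/-- The complex Gauss map associated with a nearest-integer map `fl`. -/
def gauss (fl : ℂ → ℂ) (z : ℂ) : ℂ := if z = 0 then 0 else 1 / z - fl (1 / z)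

/-- The `n`-th digit `a_n(z)` (for `n ≥ 1`) of the nearest-integer continued fraction. -/
def digit (fl : ℂ → ℂ) (n : ℕ) (z : ℂ) : ℂ := fl (1 / (gauss fl)^[n - 1] z)

/-- Auxiliary recursion producing `((p_{n-2}, q_{n-2}), (p_{n-1}, q_{n-1}))` at index `n`. -/
def convAux (a : ℕ → ℂ) : ℕ → (ℂ × ℂ) × (ℂ × ℂ)
  | 0 => ((0, 1), (1, 0))
  | n + 1 => ((convAux a n).2,
      (a n * (convAux a n).2.1 + (convAux a n).1.1,
       a n * (convAux a n).2.2 + (convAux a n).1.2))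

/-- The digit sequence of `z`, with `a_0 = 0`. -/
def aseq (fl : ℂ → ℂ) (z : ℂ) : ℕ → ℂ := fun k => if k = 0 then 0 else digit fl k z

/-- Numerator `p_n` of the `n`-th convergent of `z`. -/
def pconv (fl : ℂ → ℂ) (z : ℂ) (n : ℕ) : ℂ := (convAux (aseq fl z) (n + 1)).2.1

/-- Denominator `q_n` of the `n`-th convergent of `z`. -/
def qconv (fl : ℂ → ℂ) (z : ℂ) (n : ℕ) : ℂ := (convAux (aseq fl z) (n + 1)).2.2

/-- `p_{n-1}` (so `pprev fl z 0 = p_{-1} = 1`). -/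
def pprev (fl : ℂ → ℂ) (z : ℂ) (n : ℕ) : ℂ := (convAux (aseq fl z) (n + 1)).1.1

/-- `q_{n-1}` (so `qprev fl z 0 = q_{-1} = 0`). -/
def qprev (fl : ℂ → ℂ) (z : ℂ) (n : ℕ) : ℂ := (convAux (aseq fl z) (n + 1)).1.2

/-!
Writing `λ = n + mω` with `ω = (-1 + i√d)/2`, the condition `‖z‖ < ‖z - λ‖` becomes
`a n + c m < n² - nm + e m²`, where `a = 2 Re z`, `c = √d Im z - Re z`, `e = (d + 1)/4` and the
right-hand side is the norm of `λ`. The six lattice points `±1, ±ω, ±(1 + ω)` cut out exactly the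
hexagon `|a| < 1, |c| < e, |a + c| < e`. Conversely, on that hexagon and for `m ≥ 0` (the case
`m < 0` follows from `λ ↦ -λ`), one splits `(n, m)` along the two of `(-1, 0), (1, 0), (0, 1),
(1, 1)` spanning the cone that contains it; this bounds `a n + c m` strictly by `-n + e m`,
`(n - m) + e m` or `e m`, and each of these is at most the norm because `t ≤ t²` for integers and
`e ≥ 1`.
-/

lemma mul_add_mul_lt_mul_add_mul_of_int {α β A B : ℝ} (hα : α < A) (hβ : β < B) {p q : ℤ}
    (hp : 0 ≤ p) (hq : 0 ≤ q) (hpq : p ≠ 0 ∨ q ≠ 0) : α * p + β * q < A * p + B * q := by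
  have hp' : (0 : ℝ) ≤ p := by exact_mod_cast hp
  have hq' : (0 : ℝ) ≤ q := by exact_mod_cast hq
  rcases hpq with hp0 | hq0
  · have : (0 : ℝ) < p := by exact_mod_cast hp.lt_of_ne' hp0
    nlinarith [mul_le_mul_of_nonneg_right hβ.le hq']
  · have : (0 : ℝ) < q := by exact_mod_cast hq.lt_of_ne' hq0
    nlinarith [mul_le_mul_of_nonneg_right hα.le hp']

lemma linear_lt_normForm_of_nonneg {a c e : ℝ} (he : 1 ≤ e) (ha : |a| < 1) (hc : |c| < e)
    (hac : |a + c| < e) {n m : ℤ} (hm : 0 ≤ m) (hnm : n ≠ 0 ∨ m ≠ 0) :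
    a * n + c * m < n ^ 2 - n * m + e * m ^ 2 := by
  rw [abs_lt] at ha hc hac
  have hsq (t : ℤ) : (t : ℝ) ≤ t ^ 2 := by exact_mod_cast Int.le_self_sq t
  have hem : e * m ≤ e * m ^ 2 := mul_le_mul_of_nonneg_left (hsq m) (by linarith)
  have hm' : (0 : ℝ) ≤ m := by exact_mod_cast hm
  rcases le_total n 0 with hn | hn
  · have hn' : (0 : ℝ) ≤ -n := by exact_mod_cast neg_nonneg.mpr hn
    calc a * n + c * m = -a * ((-n : ℤ) : ℝ) + c * m := by push_cast; ring
      _ < 1 * ((-n : ℤ) : ℝ) + e * m :=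
        mul_add_mul_lt_mul_add_mul_of_int (neg_lt.mp ha.1) hc.2 (by omega) hm (by omega)
      _ ≤ n ^ 2 - n * m + e * m ^ 2 := by
        have := hsq (-n)
        push_cast at this ⊢
        nlinarith [mul_nonneg hn' hm']
  rcases le_total m n with hmn | hnm'
  · have hmn' : (0 : ℝ) ≤ n - m := by exact_mod_cast sub_nonneg.mpr hmn
    calc a * n + c * m = a * ((n - m : ℤ) : ℝ) + (a + c) * m := by push_cast; ring
      _ < 1 * ((n - m : ℤ) : ℝ) + e * m :=
        mul_add_mul_lt_mul_add_mul_of_int ha.2 hac.2 (by omega) hm (by omega)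
      _ ≤ n ^ 2 - n * m + e * m ^ 2 := by
        have := hsq (n - m)
        push_cast at this ⊢
        nlinarith [mul_nonneg hmn' hm']
  · have hn' : (0 : ℝ) ≤ n := by exact_mod_cast hn
    have hnm'' : (0 : ℝ) ≤ m - n := by exact_mod_cast sub_nonneg.mpr hnm'
    calc a * n + c * m = (a + c) * n + c * ((m - n : ℤ) : ℝ) := by push_cast; ring
      _ < e * n + e * ((m - n : ℤ) : ℝ) :=
        mul_add_mul_lt_mul_add_mul_of_int hac.2 hc.2 hn (by omega) (by omega)
      _ ≤ n ^ 2 - n * m + e * m ^ 2 := by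
        have := hsq (m - n)
        push_cast at this ⊢
        nlinarith [hsq n, mul_nonneg hn' hnm'',
          mul_le_mul_of_nonneg_right he (sub_nonneg.mpr (hsq m))]

lemma linear_lt_normForm {a c e : ℝ} (he : 1 ≤ e) (ha : |a| < 1) (hc : |c| < e)
    (hac : |a + c| < e) {n m : ℤ} (hnm : n ≠ 0 ∨ m ≠ 0) :
    a * n + c * m < n ^ 2 - n * m + e * m ^ 2 := by
  rcases le_total 0 m with hm | hm
  · exact linear_lt_normForm_of_nonneg he ha hc hac hm hnm
  · have := linear_lt_normForm_of_nonneg (a := -a) (c := -c) (n := -n) (m := -m) he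
      (by rwa [abs_neg]) (by rwa [abs_neg]) (by rwa [← neg_add, abs_neg]) (by omega) (by omega)
    push_cast at this
    linarith

theorem forall_linear_lt_normForm_iff {a c e : ℝ} (he : 1 ≤ e) :
    (∀ n m : ℤ, n ≠ 0 ∨ m ≠ 0 → a * n + c * m < n ^ 2 - n * m + e * m ^ 2) ↔
      |a| < 1 ∧ |c| < e ∧ |a + c| < e := by
  refine ⟨fun h => ?_, fun ⟨ha, hc, hac⟩ n m hnm => linear_lt_normForm he ha hc hac hnm⟩
  have h₁ := h 1 0 (by simp)
  have h₂ := h (-1) 0 (by simp)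
  have h₃ := h 0 1 (by simp)
  have h₄ := h 0 (-1) (by simp)
  have h₅ := h 1 1 (by simp)
  have h₆ := h (-1) (-1) (by simp)
  push_cast at h₁ h₂ h₃ h₄ h₅ h₆
  refine ⟨abs_lt.mpr ⟨?_, ?_⟩, abs_lt.mpr ⟨?_, ?_⟩, abs_lt.mpr ⟨?_, ?_⟩⟩ <;> linarith

lemma norm_lt_norm_sub_iff (z w : ℂ) :
    ‖z‖ < ‖z - w‖ ↔ 2 * (z.re * w.re + z.im * w.im) < w.re ^ 2 + w.im ^ 2 := by
  rw [← sq_lt_sq₀ (norm_nonneg _) (norm_nonneg _), Complex.sq_norm, Complex.sq_norm,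
    Complex.normSq_sub]
  simp only [Complex.mul_re, Complex.conj_re, Complex.conj_im, Complex.normSq_apply]
  constructor <;> intro h <;> linarith

lemma om_of_mod_four_eq_three {d : ℕ} (hd : d % 4 = 3) : om d = ⟨-1 / 2, Real.sqrt d / 2⟩ := by
  apply Complex.ext <;> simp [om, hd]

lemma re_intCast_add_mul_om {d : ℕ} (hd : d % 4 = 3) (n m : ℤ) :
    ((n : ℂ) + m * om d).re = n - m / 2 := by
  simp only [om_of_mod_four_eq_three hd, Complex.add_re, Complex.mul_re, Complex.intCast_re,
    Complex.intCast_im]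
  ring

lemma im_intCast_add_mul_om {d : ℕ} (hd : d % 4 = 3) (n m : ℤ) :
    ((n : ℂ) + m * om d).im = m * Real.sqrt d / 2 := by
  simp only [om_of_mod_four_eq_three hd, Complex.add_im, Complex.mul_im, Complex.intCast_re,
    Complex.intCast_im]
  ring

lemma intCast_add_mul_om_ne_zero_iff {d : ℕ} (hd : d % 4 = 3) (n m : ℤ) :
    (n : ℂ) + m * om d ≠ 0 ↔ n ≠ 0 ∨ m ≠ 0 := by
  have hsqrt : Real.sqrt d ≠ 0 := by
    rw [Real.sqrt_ne_zero', Nat.cast_pos]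
    omega
  rw [Ne, Complex.ext_iff, re_intCast_add_mul_om hd, im_intCast_add_mul_om hd]
  rcases eq_or_ne m 0 with rfl | hm <;> simp [*]

lemma mem_Kd_iff {d : ℕ} (hd : d % 4 = 3) (z : ℂ) :
    z ∈ Kd d ↔ ∀ n m : ℤ, n ≠ 0 ∨ m ≠ 0 →
      2 * z.re * n + (Real.sqrt d * z.im - z.re) * m < n ^ 2 - n * m + (d + 1) / 4 * m ^ 2 := by
  have hs : Real.sqrt d ^ 2 = d := Real.sq_sqrt (Nat.cast_nonneg d)
  simp only [Kd, Od, Set.mem_ofPred_eq, forall_exists_index]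
  rw [forall_comm]
  refine forall_congr' fun n => ?_
  rw [forall_comm]
  refine forall_congr' fun m => ?_
  rw [forall_eq, intCast_add_mul_om_ne_zero_iff hd, norm_lt_norm_sub_iff,
    re_intCast_add_mul_om hd, im_intCast_add_mul_om hd]
  exact imp_congr_right fun _ =>
    iff_of_eq (congrArg₂ _ (by ring) (by linear_combination (m : ℝ) ^ 2 / 4 * hs))

/-- for `d = 3, 7, 11`, the Dirichlet fundamental domain `K_d` is
the open hexagon `{x + iy : |x| < 1/2, |x − √d·y| < (d+1)/4, |x + √d·y| < (d+1)/4}`. -/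
theorem Kd_eq_hexagon (d : ℕ) (hd : d = 3 ∨ d = 7 ∨ d = 11) :
    Kd d = {z : ℂ | |z.re| < 1 / 2 ∧
      |z.re - Real.sqrt d * z.im| < (d + 1) / 4 ∧
      |z.re + Real.sqrt d * z.im| < (d + 1) / 4} := by
  have hd4 : d % 4 = 3 := by rcases hd with rfl | rfl | rfl <;> rfl
  have he : (1 : ℝ) ≤ (d + 1) / 4 := by rcases hd with rfl | rfl | rfl <;> norm_num
  ext z
  rw [mem_Kd_iff hd4, forall_linear_lt_normForm_iff he, Set.mem_ofPred_eq]
  simp only [abs_lt]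
  constructor <;> rintro ⟨⟨_, _⟩, ⟨_, _⟩, ⟨_, _⟩⟩ <;>
    refine ⟨⟨?_, ?_⟩, ⟨?_, ?_⟩, ⟨?_, ?_⟩⟩ <;> linarith

end
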